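/- Let K be a closed convex cone in H(M_A,M_B) and let φ ∈ H(M_A,M_B). The following are equivalent: (1) φ ∈ K^⊲; (2) (φ* ⊗ 1_B)(C_ψ) ∈ C_{K°} for every ψ ∈ CP_B; (3) (ψ ⊗ 1_A)(C_{φ*}) ∈ C_{K*°} for every ψ ∈ CP_B; (4) (σ ⊗ 1_B)(C_φ) is positive semidefinite for every σ ∈ K; (5) (φ ⊗ 1_B)(C_σ) is positive semidefinite for every σ ∈ K. -/

import Mathlib

open Matrix Finset
open scoped ComplexOrder Kronecker

/-- The algebra of `n × n` complex matrices. -/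
abbrev Mat (n : ℕ) := Matrix (Fin n) (Fin n) ℂ

/-- Linear maps between matrix algebras. -/
abbrev MMap (m n : ℕ) := Mat m →ₗ[ℂ] Mat n

/-- The bilinear pairing `⟨a,b⟩ = Tr(aᵀ b)`. -/
noncomputable def mpair {ι : Type*} [Fintype ι] (x y : Matrix ι ι ℂ) : ℂ :=
  (xᵀ * y).trace

/-- The Choi matrix `C_φ = Σ_{i,j} e_{ij} ⊗ φ(e_{ij})`. -/
noncomputable def choi {m n : ℕ} (φ : MMap m n) :
    Matrix (Fin m × Fin n) (Fin m × Fin n) ℂ :=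
  Matrix.of fun p q => φ (Matrix.single p.1 q.1 1) p.2 q.2

/-- The pairing on maps `⟨φ,ψ⟩ = ⟨C_φ, C_ψ⟩`. -/
noncomputable def mapPair {m n : ℕ} (φ ψ : MMap m n) : ℂ := mpair (choi φ) (choi ψ)

/-- The adjoint `φ*` with respect to the pairing `⟨a,b⟩ = Tr(aᵀ b)`:
it satisfies `⟨φ(a),b⟩ = ⟨a,φ*(b)⟩`. -/
noncomputable def adjMap {m n : ℕ} (φ : MMap m n) : MMap n m where
  toFun y := Matrix.of fun i j => mpair (φ (Matrix.single i j 1)) y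
  map_add' y z := by
    ext i j
    simp [mpair, Matrix.mul_add]
  map_smul' c y := by
    ext i j
    simp [mpair, Matrix.mul_smul]

/-- Hermitian-preserving maps: `φ(a*) = φ(a)*`. -/
def IsHermP {m n : ℕ} (φ : MMap m n) : Prop := ∀ x : Mat m, φ xᴴ = (φ x)ᴴ

/-- The real vector space `H(M_A,M_B)` of Hermitian-preserving maps, as a set. -/
def HermSet (m n : ℕ) : Set (MMap m n) := {φ | IsHermP φ}

/-- Positive maps: mapping positive semidefinite matrices to positive semidefinite ones. -/
def IsPosMap {m n : ℕ} (φ : MMap m n) : Prop :=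
  ∀ x : Mat m, x.PosSemidef → (φ x).PosSemidef

/-- Completely positive maps: those whose Choi matrix is positive semidefinite. -/
def IsCP {m n : ℕ} (φ : MMap m n) : Prop := (choi φ).PosSemidef

/-- The cone `CP` of completely positive maps. -/
def CPset (m n : ℕ) : Set (MMap m n) := {φ | IsCP φ}

/-- `K₁ ∘ K₀ = {φ₁ ∘ φ₀ : φ₁ ∈ K₁, φ₀ ∈ K₀}`. -/
def compSet {m n p : ℕ} (K1 : Set (MMap n p)) (K0 : Set (MMap m n)) : Set (MMap m p) :=
  {χ | ∃ φ₁ ∈ K1, ∃ φ₀ ∈ K0, χ = φ₁ ∘ₗ φ₀}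

/-- `K₂ ∘ K₁ ∘ K₀ = {φ₂ ∘ φ₁ ∘ φ₀ : φᵢ ∈ Kᵢ}`. -/
def comp3 {m n p q : ℕ} (K2 : Set (MMap p q)) (K1 : Set (MMap n p)) (K0 : Set (MMap m n)) :
    Set (MMap m q) :=
  {χ | ∃ φ₂ ∈ K2, ∃ φ₁ ∈ K1, ∃ φ₀ ∈ K0, χ = φ₂ ∘ₗ φ₁ ∘ₗ φ₀}

/-- The dual cone `K° = {ψ ∈ H(M_A,M_B) : ⟨φ,ψ⟩ ≥ 0 for all φ ∈ K}`. -/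
def dualCone {m n : ℕ} (K : Set (MMap m n)) : Set (MMap m n) :=
  {ψ | IsHermP ψ ∧ ∀ φ ∈ K, 0 ≤ mapPair φ ψ}

/-- `K* = {φ* : φ ∈ K}`. -/
noncomputable def starSet {m n : ℕ} (K : Set (MMap m n)) : Set (MMap n m) := adjMap '' K

/-- `K^⊳ = (K ∘ CP_A)°`. -/
def rdualSet {m n : ℕ} (K : Set (MMap m n)) : Set (MMap m n) :=
  dualCone (compSet K (CPset m m))

/-- `K^⊲ = (CP_B ∘ K)°`. -/
def ldualSet {m n : ℕ} (K : Set (MMap m n)) : Set (MMap m n) :=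
  dualCone (compSet (CPset n n) K)

/-- A convex cone of maps: closed under addition and nonnegative real scaling. -/
def IsConeSet {m n : ℕ} (K : Set (MMap m n)) : Prop :=
  (∀ φ ∈ K, ∀ ψ ∈ K, φ + ψ ∈ K) ∧ (∀ φ ∈ K, ∀ r : ℝ, 0 ≤ r → (r : ℂ) • φ ∈ K)

/-- A closed convex cone of maps (closedness via the Choi isomorphism). -/
def IsClosedConeSet {m n : ℕ} (K : Set (MMap m n)) : Prop :=
  IsConeSet K ∧ IsClosed (choi '' K)

/-- Ampliation `1_Z ⊗ σ : M_Z ⊗ M_X → M_Z ⊗ M_Y`. -/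
def idTensor {z x y : ℕ} (σ : MMap x y)
    (M : Matrix (Fin z × Fin x) (Fin z × Fin x) ℂ) :
    Matrix (Fin z × Fin y) (Fin z × Fin y) ℂ :=
  Matrix.of fun p q => σ (Matrix.of fun k l => M (p.1, k) (q.1, l)) p.2 q.2

/-- Ampliation `σ ⊗ 1_Z : M_X ⊗ M_Z → M_Y ⊗ M_Z`. -/
def tensorId {x y z : ℕ} (σ : MMap x y)
    (M : Matrix (Fin x × Fin z) (Fin x × Fin z) ℂ) :
    Matrix (Fin y × Fin z) (Fin y × Fin z) ℂ :=
  Matrix.of fun p q => σ (Matrix.of fun i j => M (i, p.2) (j, q.2)) p.1 q.1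

/-- `S_1`: the closed convex cone generated by `x ⊗ y` with `x, y` positive semidefinite. -/
def SepCone (m n : ℕ) : Set (Matrix (Fin m × Fin n) (Fin m × Fin n) ℂ) :=
  closure {X | ∃ (r : ℕ) (x : Fin r → Mat m) (y : Fin r → Mat n),
    (∀ i, (x i).PosSemidef ∧ (y i).PosSemidef) ∧ X = ∑ i, x i ⊗ₖ y i}

/-- `SP_1`: Hermitian-preserving maps with separable Choi matrix. -/
def SP1set (m n : ℕ) : Set (MMap m n) := {φ | IsHermP φ ∧ choi φ ∈ SepCone m n}


/-- Vectors of Schmidt rank at most `k`. -/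
def SchmidtRankLE (k : ℕ) {m n : ℕ} (ξ : Fin m × Fin n → ℂ) : Prop :=
  ∃ (u : Fin k → Fin m → ℂ) (v : Fin k → Fin n → ℂ),
    ξ = fun p => ∑ i, u i p.1 * v i p.2

/-- `k`-blockpositive matrices: `⟨Y, |ξ⟩⟨ξ|⟩ ≥ 0` for every `ξ` of Schmidt rank at most `k`. -/
def BlockPos (k : ℕ) {m n : ℕ} (Y : Matrix (Fin m × Fin n) (Fin m × Fin n) ℂ) : Prop :=
  ∀ ξ : Fin m × Fin n → ℂ, SchmidtRankLE k ξ →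
    0 ≤ mpair Y (Matrix.of fun p q => ξ p * star (ξ q))

/-- `S_k`: the closed convex cone generated by `|ξ⟩⟨ξ|` for `ξ` of Schmidt rank at most `k`. -/
def SchmidtCone (k m n : ℕ) : Set (Matrix (Fin m × Fin n) (Fin m × Fin n) ℂ) :=
  closure {X | ∃ (r : ℕ) (ξ : Fin r → Fin m × Fin n → ℂ),
    (∀ i, SchmidtRankLE k (ξ i)) ∧
    X = ∑ i, Matrix.of fun p q => ξ i p * star (ξ i q)}

/-- `k`-positive maps: the ampliation `1_{M_k} ⊗ φ` is a positive map. -/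
def IsKPos (k : ℕ) {m n : ℕ} (φ : MMap m n) : Prop :=
  ∀ X : Matrix (Fin k × Fin m) (Fin k × Fin m) ℂ, X.PosSemidef → (idTensor φ X).PosSemidef

/-- The transpose map as a linear map. -/
def tmap (m : ℕ) : MMap m m where
  toFun x := xᵀ
  map_add' x y := by simp [Matrix.transpose_add]
  map_smul' c x := by simp [Matrix.transpose_smul]

/-- Completely copositive maps: `CCP = {φ ∘ t : φ ∈ CP}`. -/
def CCPset (m : ℕ) : Set (MMap m m) := {χ | ∃ φ, IsCP φ ∧ χ = φ ∘ₗ tmap m}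

/-- PPT maps: `PPT = CP ∩ CCP`. -/
def PPTset (m : ℕ) : Set (MMap m m) := CPset m m ∩ CCPset m

/-- Decomposable maps: the convex hull of `CP` and `CCP`. -/
noncomputable def DECset (m : ℕ) : Set (MMap m m) := convexHull ℝ (CPset m m ∪ CCPset m)

/-- The cone `P_1` of positive maps. -/
def P1set (m n : ℕ) : Set (MMap m n) := {φ | IsPosMap φ}

/-- A right-mapping cone: a closed convex cone of positive (Hermitian-preserving) maps `L`
with `L ∘ CP_A ⊆ L`. -/
def IsRMC {m n : ℕ} (L : Set (MMap m n)) : Prop :=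
  L ⊆ HermSet m n ∧ (∀ φ ∈ L, IsPosMap φ) ∧ IsClosedConeSet L ∧
    compSet L (CPset m m) ⊆ L

/-- A left-mapping cone: a closed convex cone of positive (Hermitian-preserving) maps `L`
with `CP_B ∘ L ⊆ L`. -/
def IsLMC {m n : ℕ} (L : Set (MMap m n)) : Prop :=
  L ⊆ HermSet m n ∧ (∀ φ ∈ L, IsPosMap φ) ∧ IsClosedConeSet L ∧
    compSet (CPset n n) L ⊆ L


/-! ### Auxiliary lemmas -/

section Aux

lemma matrix_expand {m : ℕ} (x : Mat m) :
    x = ∑ r : Fin m × Fin m, x r.1 r.2 • Matrix.single r.1 r.2 (1:ℂ) := by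
  rw [Fintype.sum_prod_type]
  conv_lhs => rw [matrix_eq_sum_single x]
  refine Finset.sum_congr rfl fun i _ => Finset.sum_congr rfl fun k _ => ?_
  rw [smul_single, smul_eq_mul, mul_one]

lemma map_expand {m n : ℕ} (σ : MMap m n) (x : Mat m) (p q : Fin n) :
    σ x p q = ∑ r : Fin m × Fin m, x r.1 r.2 * σ (Matrix.single r.1 r.2 1) p q := by
  conv_lhs => rw [matrix_expand x, map_sum]
  simp only [LinearMap.map_smul, Matrix.sum_apply, Matrix.smul_apply, smul_eq_mul]

lemma mpair_sum {ι : Type*} [Fintype ι] (x y : Matrix ι ι ℂ) :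
    mpair x y = ∑ r : ι × ι, x r.1 r.2 * y r.1 r.2 := by
  rw [Fintype.sum_prod_type]
  simp only [mpair, Matrix.trace, Matrix.diag, Matrix.mul_apply, Matrix.transpose_apply]
  exact Finset.sum_comm

lemma mpair_comm {ι : Type*} [Fintype ι] (x y : Matrix ι ι ℂ) :
    mpair x y = mpair y x := by
  simp only [mpair_sum]
  exact Finset.sum_congr rfl fun r _ => mul_comm _ _

lemma mpair_stdBasis_left {m : ℕ} (i j : Fin m) (z : Mat m) :
    mpair (Matrix.single i j 1) z = z i j := by
  rw [mpair_sum, Fintype.sum_prod_type]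
  simp [Matrix.single, ite_and, Finset.sum_ite_eq]

lemma mpair_stdBasis_right {m : ℕ} (z : Mat m) (i j : Fin m) :
    mpair z (Matrix.single i j 1) = z i j := by
  rw [mpair_comm, mpair_stdBasis_left]

lemma adjMap_apply {m n : ℕ} (φ : MMap m n) (y : Mat n) (i j : Fin m) :
    adjMap φ y i j = mpair (φ (Matrix.single i j 1)) y := rfl

lemma mpair_adj {m n : ℕ} (φ : MMap m n) (x : Mat m) (y : Mat n) :
    mpair (φ x) y = mpair x (adjMap φ y) := by
  rw [mpair_sum (φ x) y, mpair_sum x (adjMap φ y)]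
  have : ∀ r : Fin m × Fin m,
      x r.1 r.2 * adjMap φ y r.1 r.2
        = ∑ s : Fin n × Fin n, x r.1 r.2 * (φ (Matrix.single r.1 r.2 1) s.1 s.2 * y s.1 s.2) := by
    intro r
    rw [adjMap_apply, mpair_sum, Finset.mul_sum]
  rw [Finset.sum_congr rfl fun r _ => this r, Finset.sum_comm]
  refine Finset.sum_congr rfl fun s _ => ?_
  rw [map_expand φ x s.1 s.2, Finset.sum_mul]
  refine Finset.sum_congr rfl fun r _ => by ring

lemma mpair_adj' {m n : ℕ} (φ : MMap m n) (x : Mat n) (y : Mat m) :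
    mpair (adjMap φ x) y = mpair x (φ y) := by
  rw [mpair_comm, ← mpair_adj, mpair_comm]

lemma adjMap_adjMap {m n : ℕ} (φ : MMap m n) : adjMap (adjMap φ) = φ := by
  apply LinearMap.ext; intro y
  ext i j
  rw [adjMap_apply, mpair_adj', mpair_stdBasis_left]

lemma adjMap_comp {m n p : ℕ} (ψ : MMap n p) (σ : MMap m n) :
    adjMap (ψ ∘ₗ σ) = adjMap σ ∘ₗ adjMap ψ := by
  apply LinearMap.ext; intro y
  ext i j
  rw [adjMap_apply, LinearMap.comp_apply, LinearMap.comp_apply, adjMap_apply]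
  exact mpair_adj ψ _ y

lemma choi_apply {m n : ℕ} (φ : MMap m n) (p q : Fin m × Fin n) :
    choi φ p q = φ (Matrix.single p.1 q.1 1) p.2 q.2 := rfl

lemma choi_eq_iff {m n : ℕ} {φ ψ : MMap m n} (h : choi φ = choi ψ) : φ = ψ := by
  have h' : ∀ p q, choi φ p q = choi ψ p q := fun p q => by rw [h]
  apply LinearMap.ext; intro x
  ext p q
  rw [map_expand φ, map_expand ψ]
  exact Finset.sum_congr rfl fun r _ => by
    rw [show φ (Matrix.single r.1 r.2 1) p q = choi φ ((r.1, p)) ((r.2, q)) from rfl,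
      show ψ (Matrix.single r.1 r.2 1) p q = choi ψ ((r.1, p)) ((r.2, q)) from rfl, h']

lemma choi_mem_image {m n : ℕ} (χ : MMap m n) (S : Set (MMap m n)) :
    choi χ ∈ choi '' S ↔ χ ∈ S := by
  constructor
  · rintro ⟨ρ, hρ, h⟩
    rwa [← choi_eq_iff h]
  · exact fun h => ⟨χ, h, rfl⟩

lemma choi_adjMap {m n : ℕ} (φ : MMap m n) :
    choi (adjMap φ) = (choi φ).submatrix Prod.swap Prod.swap := by
  ext p q
  rw [choi_apply, adjMap_apply, mpair_stdBasis_right]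
  rfl

lemma stdBasis_conjTranspose {m : ℕ} (i j : Fin m) :
    (Matrix.single i j (1:ℂ))ᴴ = Matrix.single j i 1 := by
  ext u v
  simp only [conjTranspose_apply, Matrix.single, Matrix.of_apply]
  split_ifs with h1 h2 h2 <;> simp_all [and_comm]

lemma choi_hermitian_of_hermP {m n : ℕ} {φ : MMap m n} (h : IsHermP φ) :
    (choi φ).IsHermitian := by
  refine Matrix.IsHermitian.ext fun p q => ?_
  rw [choi_apply, choi_apply]
  have := congrFun (congrFun (h (Matrix.single q.1 p.1 1)) p.2) q.2
  rw [stdBasis_conjTranspose] at this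
  rw [this, conjTranspose_apply]

lemma hermP_of_choi_hermitian {m n : ℕ} {φ : MMap m n} (h : (choi φ).IsHermitian) :
    IsHermP φ := by
  intro x
  ext p q
  rw [conjTranspose_apply, map_expand φ xᴴ, map_expand φ x, star_sum]
  rw [← Equiv.sum_comp (Equiv.prodComm (Fin m) (Fin m))
    (fun r : Fin m × Fin m => xᴴ r.1 r.2 * φ (Matrix.single r.1 r.2 1) p q)]
  refine Finset.sum_congr rfl fun r _ => ?_
  have hh : star (φ (Matrix.single r.1 r.2 1) q p) = φ (Matrix.single r.2 r.1 1) p q := by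
    have := h.apply (r.2, p) (r.1, q)
    simpa [choi_apply] using this
  rw [star_mul', hh]
  simp [conjTranspose_apply, Equiv.prodComm]

lemma cp_hermP {m n : ℕ} {ψ : MMap m n} (h : IsCP ψ) : IsHermP ψ :=
  hermP_of_choi_hermitian h.isHermitian

lemma hermP_comp {m n p : ℕ} {ψ : MMap n p} {φ : MMap m n}
    (hψ : IsHermP ψ) (hφ : IsHermP φ) : IsHermP (ψ ∘ₗ φ) := by
  intro x
  rw [LinearMap.comp_apply, LinearMap.comp_apply, hφ, hψ]

lemma hermP_adjMap {m n : ℕ} {φ : MMap m n} (h : IsHermP φ) : IsHermP (adjMap φ) :=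
  hermP_of_choi_hermitian (by
    rw [choi_adjMap]
    exact (choi_hermitian_of_hermP h).submatrix _)

lemma isCP_adjMap {m n : ℕ} {φ : MMap m n} (h : IsCP φ) : IsCP (adjMap φ) := by
  rw [IsCP, choi_adjMap]
  exact h.submatrix _

lemma isCP_adjMap_iff {m n : ℕ} (φ : MMap m n) : IsCP (adjMap φ) ↔ IsCP φ :=
  ⟨fun h => by simpa [adjMap_adjMap] using isCP_adjMap h, isCP_adjMap⟩

lemma mapPair_sum' {m n : ℕ} (χ ρ : MMap m n) :
    mapPair χ ρ
      = ∑ r : Fin m × Fin m,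
          mpair (χ (Matrix.single r.1 r.2 1)) (ρ (Matrix.single r.1 r.2 1)) := by
  rw [mapPair, mpair_sum]
  simp only [mpair_sum]
  rw [← Fintype.sum_prod_type']
  exact Fintype.sum_equiv (Equiv.prodProdProdComm (Fin m) (Fin n) (Fin m) (Fin n)) _ _
    (fun x => rfl)

lemma mapPair_comm {m n : ℕ} (χ ρ : MMap m n) : mapPair χ ρ = mapPair ρ χ := by
  rw [mapPair, mapPair, mpair_comm]

lemma mapPair_adj_adj {m n : ℕ} (χ ρ : MMap m n) :
    mapPair (adjMap χ) (adjMap ρ) = mapPair χ ρ := by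
  rw [mapPair, mapPair, choi_adjMap, choi_adjMap, mpair_sum, mpair_sum]
  exact Fintype.sum_equiv
    (Equiv.prodCongr (Equiv.prodComm (Fin n) (Fin m)) (Equiv.prodComm (Fin n) (Fin m)))
    _ _ (fun x => rfl)

lemma mpair_map_left {m n : ℕ} (α : MMap m n) (x : Mat m) (y : Mat n) :
    mpair (α x) y
      = ∑ s : Fin m × Fin m, x s.1 s.2 * mpair (α (Matrix.single s.1 s.2 1)) y := by
  rw [mpair_adj, mpair_sum]
  exact Finset.sum_congr rfl fun s _ => by rw [adjMap_apply]

/-- The key adjoint identity: `⟨α ∘ β, γ⟩ = ⟨α, γ ∘ β*⟩`. -/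
lemma mapPair_comp_adj {a c b : ℕ} (β : MMap a c) (α : MMap c b) (γ : MMap a b) :
    mapPair (α ∘ₗ β) γ = mapPair α (γ ∘ₗ adjMap β) := by
  rw [mapPair_sum', mapPair_sum']
  have lhs : ∀ r : Fin a × Fin a,
      mpair ((α ∘ₗ β) (Matrix.single r.1 r.2 1)) (γ (Matrix.single r.1 r.2 1))
        = ∑ s : Fin c × Fin c, β (Matrix.single r.1 r.2 1) s.1 s.2 *
            mpair (α (Matrix.single s.1 s.2 1)) (γ (Matrix.single r.1 r.2 1)) := by
    intro r
    rw [LinearMap.comp_apply, mpair_map_left]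
  have rhs : ∀ s : Fin c × Fin c,
      mpair (α (Matrix.single s.1 s.2 1)) ((γ ∘ₗ adjMap β) (Matrix.single s.1 s.2 1))
        = ∑ r : Fin a × Fin a, β (Matrix.single r.1 r.2 1) s.1 s.2 *
            mpair (α (Matrix.single s.1 s.2 1)) (γ (Matrix.single r.1 r.2 1)) := by
    intro s
    rw [LinearMap.comp_apply, mpair_comm, mpair_map_left]
    refine Finset.sum_congr rfl fun r _ => ?_
    rw [adjMap_apply, mpair_stdBasis_right, mpair_comm]
  rw [Finset.sum_congr rfl fun r _ => lhs r, Finset.sum_congr rfl fun s _ => rhs s,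
    Finset.sum_comm]

/-- The ampliation of a Choi matrix is a Choi matrix: `(τ ⊗ 1)(C_χ) = C_{χ ∘ τ*}`. -/
lemma tensorId_choi {x y z : ℕ} (τ : MMap x y) (χ : MMap x z) :
    tensorId τ (choi χ) = choi (χ ∘ₗ adjMap τ) := by
  ext p q
  show τ (Matrix.of fun i j => choi χ (i, p.2) (j, q.2)) p.1 q.1
    = (χ ∘ₗ adjMap τ) (Matrix.single p.1 q.1 1) p.2 q.2
  rw [map_expand, LinearMap.comp_apply, map_expand]
  refine Finset.sum_congr rfl fun r _ => ?_
  rw [adjMap_apply, mpair_stdBasis_right]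
  show choi χ (r.1, p.2) (r.2, q.2) * _ = _
  rw [choi_apply]
  ring

lemma trace_nonneg_of_psd {ι : Type*} [Fintype ι] [DecidableEq ι] {M : Matrix ι ι ℂ}
    (h : M.PosSemidef) : 0 ≤ M.trace := by
  refine Finset.sum_nonneg fun i _ => ?_
  have := h.dotProduct_mulVec_nonneg (Pi.single i 1)
  simpa [Matrix.mulVec, dotProduct, Pi.single_apply] using this

set_option maxHeartbeats 1000000 in
lemma trace_mul_nonneg_of_psd {ι : Type*} [Fintype ι] [DecidableEq ι]
    {P Q : Matrix ι ι ℂ} (hP : P.PosSemidef) (hQ : Q.PosSemidef) :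
    0 ≤ (P * Q).trace := by
  open scoped MatrixOrder in
  obtain ⟨B, rfl⟩ := CStarAlgebra.nonneg_iff_eq_star_mul_self.mp hQ.nonneg
  rw [star_eq_conjTranspose, ← mul_assoc, Matrix.trace_mul_cycle]
  exact trace_nonneg_of_psd (hP.mul_mul_conjTranspose_same B)

/-- Rank-one matrices `(star v) vᵀ` are PSD. -/
lemma rankOne_psd {ι : Type*} [Fintype ι] (v : ι → ℂ) :
    (Matrix.of fun p q => star (v p) * v q : Matrix ι ι ℂ).PosSemidef := by
  refine Matrix.PosSemidef.of_dotProduct_mulVec_nonneg ?_ ?_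
  · refine Matrix.IsHermitian.ext fun p q => ?_
    simp [conjTranspose_apply, mul_comm]
  · intro x
    have : (star x) ⬝ᵥ ((Matrix.of fun p q => star (v p) * v q : Matrix ι ι ℂ) *ᵥ x)
        = star (∑ q, v q * x q) * (∑ q, v q * x q) := by
      simp only [dotProduct, Matrix.mulVec, Matrix.of_apply, star_sum, star_mul',
        Pi.star_apply]
      rw [Finset.sum_mul]
      refine Finset.sum_congr rfl fun p _ => ?_
      rw [Finset.mul_sum, Finset.mul_sum]
      refine Finset.sum_congr rfl fun q _ => by ring
    rw [this]
    exact star_mul_self_nonneg _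

/-- Surjectivity of the Choi correspondence. -/
noncomputable def mapOfChoi {m n : ℕ} (M : Matrix (Fin m × Fin n) (Fin m × Fin n) ℂ) :
    MMap m n where
  toFun x := Matrix.of fun j l => ∑ r : Fin m × Fin m, x r.1 r.2 * M (r.1, j) (r.2, l)
  map_add' x y := by
    ext j l
    simp [add_mul, Finset.sum_add_distrib]
  map_smul' c x := by
    ext j l
    simp [Finset.mul_sum, mul_assoc]

lemma choi_mapOfChoi {m n : ℕ} (M : Matrix (Fin m × Fin n) (Fin m × Fin n) ℂ) :
    choi (mapOfChoi M) = M := by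
  ext p q
  show ∑ r : Fin m × Fin m, Matrix.single p.1 q.1 (1:ℂ) r.1 r.2 * M (r.1, p.2) (r.2, q.2)
    = M p q
  rw [Fintype.sum_prod_type]
  simp [Matrix.single, ite_and, Finset.sum_ite_eq]

lemma mpair_eq_dot {m n : ℕ} (v : Fin m × Fin n → ℂ)
    (M : Matrix (Fin m × Fin n) (Fin m × Fin n) ℂ) :
    mpair (Matrix.of fun p q => star (v p) * v q) M = (star v) ⬝ᵥ (M *ᵥ v) := by
  rw [mpair_sum, Fintype.sum_prod_type]
  simp only [dotProduct, Matrix.mulVec, Matrix.of_apply, Pi.star_apply]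
  refine Finset.sum_congr rfl fun p _ => ?_
  rw [Finset.mul_sum]
  refine Finset.sum_congr rfl fun q _ => by ring

/-- A Hermitian-preserving map is CP iff it pairs nonnegatively with all CP maps. -/
lemma isCP_iff_pair {m n : ℕ} {χ : MMap m n} (hχ : IsHermP χ) :
    IsCP χ ↔ ∀ ψ : MMap m n, IsCP ψ → 0 ≤ mapPair ψ χ := by
  constructor
  · intro h ψ hψ
    unfold mapPair mpair
    exact trace_mul_nonneg_of_psd (hψ.transpose) h
  · intro h
    refine Matrix.PosSemidef.of_dotProduct_mulVec_nonneg (choi_hermitian_of_hermP hχ) fun v => ?_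
    have hP := rankOne_psd v
    have hcp : IsCP (mapOfChoi (Matrix.of fun p q => star (v p) * v q)) := by
      rw [IsCP, choi_mapOfChoi]; exact hP
    have := h _ hcp
    rwa [mapPair, choi_mapOfChoi, mpair_eq_dot] at this

lemma psd_iff_pair {m n : ℕ} {χ : MMap m n} (hχ : IsHermP χ) :
    (choi χ).PosSemidef ↔ ∀ ψ : MMap m n, IsCP ψ → 0 ≤ mapPair ψ χ :=
  isCP_iff_pair hχ

end Aux

/-- characterizations of membership in `K^⊲` via ampliations. -/
theorem stmt15 {a b : ℕ} (K : Set (MMap a b))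
    (hH : K ⊆ HermSet a b) (hK : IsClosedConeSet K)
    (φ : MMap a b) (hφ : IsHermP φ) :
    [φ ∈ ldualSet K,
     ∀ ψ ∈ CPset b b, tensorId (adjMap φ) (choi ψ) ∈ choi '' dualCone K,
     ∀ ψ ∈ CPset b b, tensorId ψ (choi (adjMap φ)) ∈ choi '' dualCone (starSet K),
     ∀ σ ∈ K, (tensorId σ (choi φ)).PosSemidef,
     ∀ σ ∈ K, (tensorId φ (choi σ)).PosSemidef].TFAE := by
  have c4 : ∀ σ : MMap a b, tensorId σ (choi φ) = choi (φ ∘ₗ adjMap σ) :=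
    fun σ => tensorId_choi σ φ
  have c5 : ∀ σ : MMap a b, tensorId φ (choi σ) = choi (σ ∘ₗ adjMap φ) :=
    fun σ => tensorId_choi φ σ
  have h1iff : φ ∈ ldualSet K ↔ ∀ σ ∈ K, ∀ ψ, IsCP ψ → 0 ≤ mapPair ψ (φ ∘ₗ adjMap σ) := by
    constructor
    · rintro ⟨-, h⟩ σ hσ ψ hψ
      rw [← mapPair_comp_adj σ ψ φ]
      exact h _ ⟨ψ, hψ, σ, hσ, rfl⟩
    · intro h
      refine ⟨hφ, ?_⟩
      rintro χ ⟨ψ, hψ, σ, hσ, rfl⟩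
      rw [mapPair_comp_adj σ ψ φ]
      exact h σ hσ ψ hψ
  have h4iff : (∀ σ ∈ K, (tensorId σ (choi φ)).PosSemidef)
      ↔ ∀ σ ∈ K, ∀ ψ, IsCP ψ → 0 ≤ mapPair ψ (φ ∘ₗ adjMap σ) := by
    refine forall_congr' fun σ => forall_congr' fun hσ => ?_
    rw [c4 σ]
    exact psd_iff_pair (hermP_comp hφ (hermP_adjMap (hH hσ)))
  have h5iff : (∀ σ ∈ K, (tensorId φ (choi σ)).PosSemidef)
      ↔ ∀ σ ∈ K, ∀ ψ, IsCP ψ → 0 ≤ mapPair σ (ψ ∘ₗ φ) := by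
    refine forall_congr' fun σ => forall_congr' fun hσ => ?_
    rw [c5 σ, psd_iff_pair (hermP_comp (hH hσ) (hermP_adjMap hφ))]
    refine forall_congr' fun ψ => ?_
    refine imp_congr_right fun hψ => ?_
    rw [← mapPair_comp_adj φ ψ σ, mapPair_comm]
  have h2iff : (∀ ψ ∈ CPset b b, tensorId (adjMap φ) (choi ψ) ∈ choi '' dualCone K)
      ↔ ∀ ψ, IsCP ψ → ∀ σ ∈ K, 0 ≤ mapPair σ (ψ ∘ₗ φ) := by
    refine forall_congr' fun ψ => forall_congr' fun hψ => ?_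
    rw [tensorId_choi (adjMap φ) ψ, adjMap_adjMap, choi_mem_image]
    constructor
    · rintro ⟨-, h⟩
      exact h
    · intro h
      exact ⟨hermP_comp (cp_hermP hψ) hφ, h⟩
  have h3iff : (∀ ψ ∈ CPset b b, tensorId ψ (choi (adjMap φ)) ∈ choi '' dualCone (starSet K))
      ↔ ∀ ψ, IsCP ψ → ∀ σ ∈ K, 0 ≤ mapPair σ (ψ ∘ₗ φ) := by
    refine forall_congr' fun ψ => forall_congr' fun hψ => ?_
    rw [tensorId_choi ψ (adjMap φ), choi_mem_image,
      show adjMap φ ∘ₗ adjMap ψ = adjMap (ψ ∘ₗ φ) from (adjMap_comp ψ φ).symm]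
    constructor
    · rintro ⟨-, h⟩ σ hσ
      have := h (adjMap σ) ⟨σ, hσ, rfl⟩
      rwa [mapPair_adj_adj] at this
    · intro h
      refine ⟨hermP_adjMap (hermP_comp (cp_hermP hψ) hφ), ?_⟩
      rintro ρ ⟨σ, hσ, rfl⟩
      rw [mapPair_adj_adj]
      exact h σ hσ
  tfae_have 1 ↔ 4 := h1iff.trans h4iff.symm
  tfae_have 4 ↔ 5 := by
    refine forall_congr' fun σ => forall_congr' fun hσ => ?_
    rw [c4 σ, c5 σ]
    constructor
    · intro h
      have := isCP_adjMap (φ := φ ∘ₗ adjMap σ) h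
      rwa [adjMap_comp, adjMap_adjMap] at this
    · intro h
      have := isCP_adjMap (φ := σ ∘ₗ adjMap φ) h
      rwa [adjMap_comp, adjMap_adjMap] at this
  tfae_have 2 ↔ 5 := by
    rw [h2iff, h5iff]
    exact ⟨fun h σ hσ ψ hψ => h ψ hψ σ hσ, fun h ψ hψ σ hσ => h σ hσ ψ hψ⟩
  tfae_have 3 ↔ 2 := by rw [h3iff, h2iff]
  tfae_finish
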